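/- (Invariance of Belavin's R-matrix.) With g, h ∈ GL(ℂ^n) defined by g e^k = exp(2πik/n)e^k and h e^k = e^{k+1} (indices mod n), Belavin's R-matrix satisfies R(u) = (x⊗x)R(u)(x⊗x)^{-1} for x = g and x = h, where R(u)^{ij}_{i'j'} = δ_{i+j,i'+j'} θ^{(i'-j')}(u+ℏ)/(θ^{(i'-i)}(ℏ)θ^{(i-j')}(u)) · ∏_{k=0}^{n-1}θ^{(k)}(u)/∏_{k=1}^{n-1}θ^{(k)}(0). -/

import Mathlib

open Kronecker

/-- `θ^{(j)}(u) := θ_{1/2 - j/n, 1}(u + 1/2, nτ)` for `j : ZMod n`. -/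
noncomputable def thetaB (n : ℕ) (τ : ℂ) (j : ZMod n) (u : ℂ) : ℂ :=
  ∑' μ : ℤ, Complex.exp ((2 * ↑Real.pi * Complex.I) *
    (((μ : ℂ) + 1/2 - (j.val : ℂ)/(n : ℂ)) * (u + 1/2) +
      ((μ : ℂ) + 1/2 - (j.val : ℂ)/(n : ℂ))^2 * ((n : ℂ) * τ) / 2))

/-- Matrix elements of Belavin's R-matrix. -/
noncomputable def belavinR (n : ℕ) (τ hb u : ℂ) (i j i' j' : ZMod n) : ℂ :=
  if i + j = i' + j' then
    thetaB n τ (i' - j') (u + hb) / (thetaB n τ (i' - i) hb * thetaB n τ (i - j') u) *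
      (∏ k ∈ Finset.range n, thetaB n τ (k : ZMod n) u) /
      (∏ k ∈ Finset.range (n - 1), thetaB n τ ((k : ZMod n) + 1) 0)
  else 0

/-- Belavin's R-matrix as a matrix on `ℂ^n ⊗ ℂ^n`, with the convention
`R(u)(e^i⊗e^j) = Σ_{i',j'} e^{i'}⊗e^{j'} R(u)^{ij}_{i'j'}`. -/
noncomputable def belavinRMat (n : ℕ) (τ hb u : ℂ) :
    Matrix (ZMod n × ZMod n) (ZMod n × ZMod n) ℂ :=
  Matrix.of fun p q => belavinR n τ hb u q.1 q.2 p.1 p.2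

/-- `g e^k = exp(2πik/n) e^k`. -/
noncomputable def gMat (n : ℕ) : Matrix (ZMod n) (ZMod n) ℂ :=
  Matrix.diagonal fun k => Complex.exp ((2 * ↑Real.pi * Complex.I) * (k.val : ℂ) / (n : ℂ))

/-- `h e^k = e^{k+1}` (indices mod n). -/
def hMat (n : ℕ) : Matrix (ZMod n) (ZMod n) ℂ :=
  Matrix.of fun i j => if i = j + 1 then 1 else 0

open Matrix

/-! Both invariances are index bookkeeping, valid for all parameters. The entry
`R^{ij}_{i'j'}` vanishes unless `i + j = i' + j'`, so `R` commutes with `g ⊗ g`, which acts on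
`e^i ⊗ e^j` by the character value `ψ(i + j)`. Apart from that condition the entry depends on
its indices only through the differences `i' - j'`, `i' - i`, `i - j'`, so it is unchanged by
the simultaneous shift `h ⊗ h`. -/

section Shift

variable {G R : Type*} [AddCommGroup G] [DecidableEq G] [Semiring R]

def shiftMatrix (c : G) : Matrix G G R :=
  of fun i j => if i = j + c then 1 else 0

theorem shiftMatrix_kronecker_shiftMatrix {H : Type*} [AddCommGroup H] [DecidableEq H]
    (c : G) (d : H) :
    (shiftMatrix c : Matrix G G R) ⊗ₖ (shiftMatrix d : Matrix H H R) = shiftMatrix (c, d) := by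
  ext p q
  simp only [kroneckerMap_apply, shiftMatrix, of_apply, Prod.ext_iff, Prod.fst_add,
    Prod.snd_add, ite_zero_mul_ite_zero, mul_one]

theorem shiftMatrix_mul_apply [Fintype G] {ι : Type*} (c : G) (M : Matrix G ι R) (p : G) (q : ι) :
    ((shiftMatrix c : Matrix G G R) * M) p q = M (p - c) q := by
  simp [Matrix.mul_apply, shiftMatrix, ← sub_eq_iff_eq_add]

theorem mul_shiftMatrix_apply [Fintype G] {ι : Type*} (c : G) (M : Matrix ι G R) (p : ι) (q : G) :
    (M * (shiftMatrix c : Matrix G G R)) p q = M p (q + c) := by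
  simp [Matrix.mul_apply, shiftMatrix]

theorem shiftMatrix_mul_comm [Fintype G] (c : G) (M : Matrix G G R)
    (hM : ∀ p q, M (p + c) (q + c) = M p q) :
    shiftMatrix c * M = M * shiftMatrix c := by
  ext p q
  rw [shiftMatrix_mul_apply, mul_shiftMatrix_apply, ← hM, sub_add_cancel]

end Shift

theorem diagonal_addChar_kronecker_mul_comm {G R : Type*} [AddCommMonoid G] [Fintype G]
    [DecidableEq G] [CommSemiring R] (ψ : AddChar G R) (M : Matrix (G × G) (G × G) R)
    (hM : ∀ p q, p.1 + p.2 ≠ q.1 + q.2 → M p q = 0) :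
    (diagonal ψ ⊗ₖ diagonal ψ) * M = M * (diagonal ψ ⊗ₖ diagonal ψ) := by
  ext p q
  rw [diagonal_kronecker_diagonal, diagonal_mul, mul_diagonal]
  by_cases hpq : p.1 + p.2 = q.1 + q.2
  · rw [← AddChar.map_add_eq_mul, ← AddChar.map_add_eq_mul, hpq, mul_comm]
  · rw [hM p q hpq, zero_mul, mul_zero]

theorem gMat_eq_diagonal_stdAddChar (n : ℕ) [NeZero n] :
    gMat n = diagonal ZMod.stdAddChar := by
  ext i j
  simp only [gMat, diagonal_apply, ZMod.stdAddChar_apply, ZMod.toCircle_apply]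

theorem hMat_eq_shiftMatrix (n : ℕ) : hMat n = shiftMatrix 1 := rfl

section Belavin

variable (n : ℕ) (τ hb u : ℂ)

theorem belavinRMat_apply_eq_zero_of_add_ne (p q : ZMod n × ZMod n)
    (h : p.1 + p.2 ≠ q.1 + q.2) : belavinRMat n τ hb u p q = 0 :=
  if_neg (Ne.symm h)

theorem belavinR_add_add (c i j i' j' : ZMod n) :
    belavinR n τ hb u (i + c) (j + c) (i' + c) (j' + c) = belavinR n τ hb u i j i' j' := by
  have hsum : i + c + (j + c) = i' + c + (j' + c) ↔ i + j = i' + j' := by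
    constructor <;> intro h <;> linear_combination h
  simp only [belavinR, hsum, add_sub_add_right_eq_sub]

theorem belavinRMat_apply_add_add (c : ZMod n) (p q : ZMod n × ZMod n) :
    belavinRMat n τ hb u (p + (c, c)) (q + (c, c)) = belavinRMat n τ hb u p q :=
  belavinR_add_add n τ hb u c q.1 q.2 p.1 p.2

end Belavin

theorem belavinR_invariance_general (n : ℕ) [NeZero n] (τ : ℂ) (hb u : ℂ) :
    (gMat n ⊗ₖ gMat n) * belavinRMat n τ hb u =
        belavinRMat n τ hb u * (gMat n ⊗ₖ gMat n) ∧
    (hMat n ⊗ₖ hMat n) * belavinRMat n τ hb u =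
        belavinRMat n τ hb u * (hMat n ⊗ₖ hMat n) := by
  rw [gMat_eq_diagonal_stdAddChar, hMat_eq_shiftMatrix, shiftMatrix_kronecker_shiftMatrix]
  exact ⟨diagonal_addChar_kronecker_mul_comm _ _ (belavinRMat_apply_eq_zero_of_add_ne n τ hb u),
    shiftMatrix_mul_comm _ _ (belavinRMat_apply_add_add n τ hb u 1)⟩

/-- Invariance of Belavin's R-matrix: `R(u) = (x⊗x)R(u)(x⊗x)⁻¹` for `x = g, h`,
stated as `(x⊗x)·R(u) = R(u)·(x⊗x)`. -/
theorem belavinR_invariance (n : ℕ) [NeZero n] (hn : 2 ≤ n) (τ : ℂ)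
    (hτ : 0 < τ.im) (hb u : ℂ)
    (hlat : ¬ ∃ m k : ℤ, hb = (m : ℂ) + (k : ℂ) * τ)
    (hden1 : ∀ k : ZMod n, thetaB n τ k hb ≠ 0)
    (hden2 : ∀ k : ZMod n, thetaB n τ k u ≠ 0)
    (hden3 : (∏ k ∈ Finset.range (n - 1), thetaB n τ ((k : ZMod n) + 1) 0) ≠ 0) :
    (gMat n ⊗ₖ gMat n) * belavinRMat n τ hb u =
        belavinRMat n τ hb u * (gMat n ⊗ₖ gMat n) ∧
    (hMat n ⊗ₖ hMat n) * belavinRMat n τ hb u =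
        belavinRMat n τ hb u * (hMat n ⊗ₖ hMat n) :=
  belavinR_invariance_general n τ hb u
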